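/- arXiv:1605.05222 — 3 statements merged into one kernel-verified Lean document; each statement's English description precedes it below -/
import Mathlib

section
/- Horizontal visibility graphs are outerplanar in the following noncrossing sense: if i < j and p < q are two edges of HVG(x) with i < p, then it is impossible that i < p < j < q (edges drawn as arcs above the line never cross). -/
/-- The horizontal visibility graph of a sequence `x : Fin N → ℝ`:
`a < b` are adjacent iff `x k < min (x a) (x b)` for all `a < k < b`. -/
def HVG {N : ℕ} (x : Fin N → ℝ) : SimpleGraph (Fin N) where
  Adj a b := (a < b ∧ ∀ k, a < k → k < b → x k < min (x a) (x b)) ∨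
             (b < a ∧ ∀ k, b < k → k < a → x k < min (x b) (x a))
  symm := ⟨by intro a b h; tauto⟩
  loopless := ⟨by intro a h; rcases h with ⟨h, -⟩ | ⟨h, -⟩ <;> exact lt_irrefl a h⟩

/-- Degree of a vertex in the HVG. -/
noncomputable def hvgDegree {N : ℕ} (x : Fin N → ℝ) (v : Fin N) : ℕ :=
  Nat.card {w : Fin N // (HVG x).Adj v w}

theorem HVG.apply_lt_min_of_adj {N : ℕ} {x : Fin N → ℝ} {a b k : Fin N}
    (h : (HVG x).Adj a b) (hak : a < k) (hkb : k < b) : x k < min (x a) (x b) := by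
  rcases h with ⟨-, h⟩ | ⟨hba, -⟩
  · exact h k hak hkb
  · exact absurd (hak.trans hkb) hba.not_gt

theorem hvg_noncrossing_general {N : ℕ} (x : Fin N → ℝ)
    (i j p q : Fin N) (hip : i < p)
    (h1 : (HVG x).Adj i j) (h2 : (HVG x).Adj p q) :
    ¬(p < j ∧ j < q) := by
  rintro ⟨hpj, hjq⟩
  have hp_lt_j : x p < x j := (HVG.apply_lt_min_of_adj h1 hip hpj).trans_le (min_le_right _ _)
  have hj_lt_p : x j < x p := (HVG.apply_lt_min_of_adj h2 hpj hjq).trans_le (min_le_left _ _)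
  exact hp_lt_j.asymm hj_lt_p

theorem hvg_noncrossing {N : ℕ} (x : Fin N → ℝ)
    (i j p q : Fin N) (hij : i < j) (hpq : p < q) (hip : i < p)
    (h1 : (HVG x).Adj i j) (h2 : (HVG x).Adj p q) :
    ¬(p < j ∧ j < q) :=
  hvg_noncrossing_general x i j p q hip h1 h2
end

section
/- Let x : Fin N → ℝ be canonical with N ≥ 3, and let j be an inner vertex (0 < j < N-1) attaining the minimum of x over the inner indices. Then j has degree exactly 2 in HVG(x), with neighbors j-1 and j+1. -/
/-! Consecutive vertices always see each other. For a vertex `w` beyond `j ± 1`, the inner vertex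
`j ± 1` lies between `j` and `w` and, by minimality of `j`, satisfies
`x (j ± 1) ≥ x j ≥ min (x j) (x w)`, so it blocks the view. -/

namespace HVG

variable {N : ℕ} {x : Fin N → ℝ}

theorem adj_iff_of_lt (a b : Fin N) (hab : a < b) :
    (HVG x).Adj a b ↔ ∀ k, a < k → k < b → x k < min (x a) (x b) := by
  simp only [HVG, hab, true_and, or_iff_left_iff_imp, and_imp]
  exact fun hba => absurd (hab.trans hba) (lt_irrefl a)

theorem adj_of_val_eq_succ {a b : Fin N} (h : (b : ℕ) = a + 1) : (HVG x).Adj a b := by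
  have hab : a < b := Fin.lt_def.mpr (by omega)
  refine (adj_iff_of_lt a b hab).mpr fun k hak hkb => ?_
  rw [Fin.lt_def] at hak hkb
  omega

theorem not_adj_of_lt_of_lt_of_le {a k b : Fin N} (hak : a < k) (hkb : k < b)
    (hk : min (x a) (x b) ≤ x k) : ¬ (HVG x).Adj a b := fun h =>
  (((adj_iff_of_lt a b (hak.trans hkb)).mp h) k hak hkb).not_ge hk

theorem adj_iff_eq_succ_of_le_succ {a u w : Fin N} (hu : (u : ℕ) = a + 1)
    (hau : (u : ℕ) < N - 1 → x a ≤ x u) (haw : a < w) : (HVG x).Adj a w ↔ w = u := by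
  refine ⟨fun h => ?_, fun h => h ▸ adj_of_val_eq_succ hu⟩
  by_contra hwu
  have huw : (u : ℕ) < w := by
    have := Fin.lt_def.mp haw; have := Fin.val_ne_of_ne hwu; omega
  exact not_adj_of_lt_of_lt_of_le (Fin.lt_def.mpr (by omega)) (Fin.lt_def.mpr huw)
    ((min_le_left _ _).trans (hau (by omega))) h

theorem adj_iff_eq_pred_of_le_pred {b u w : Fin N} (hu : (b : ℕ) = u + 1)
    (hbu : 0 < (u : ℕ) → x b ≤ x u) (hwb : w < b) : (HVG x).Adj w b ↔ w = u := by
  refine ⟨fun h => ?_, fun h => h ▸ adj_of_val_eq_succ hu⟩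
  by_contra hwu
  have hwu' : (w : ℕ) < u := by
    have := Fin.lt_def.mp hwb; have := Fin.val_ne_of_ne hwu; omega
  exact not_adj_of_lt_of_lt_of_le (Fin.lt_def.mpr hwu') (Fin.lt_def.mpr (by omega))
    ((min_le_right _ _).trans (hbu (by omega))) h

theorem adj_iff_of_le_pred_of_le_succ {v l r : Fin N} (hl : (v : ℕ) = l + 1)
    (hr : (r : ℕ) = v + 1) (hvl : 0 < (l : ℕ) → x v ≤ x l) (hvr : (r : ℕ) < N - 1 → x v ≤ x r)
    (w : Fin N) :
    (HVG x).Adj v w ↔ w = l ∨ w = r := by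
  have hlr : l < r := Fin.lt_def.mpr (by omega)
  rcases lt_trichotomy w v with hwv | rfl | hvw
  · rw [(HVG x).adj_comm, adj_iff_eq_pred_of_le_pred hl hvl hwv]
    exact ⟨Or.inl, fun h => h.resolve_right (by rintro rfl; rw [Fin.lt_def] at hwv; omega)⟩
  · simp only [SimpleGraph.irrefl, false_iff, not_or]
    exact ⟨Fin.ne_of_val_ne (by omega), Fin.ne_of_val_ne (by omega)⟩
  · rw [adj_iff_eq_succ_of_le_succ hr hvr hvw]
    exact ⟨Or.inr, fun h => h.resolve_left (by rintro rfl; rw [Fin.lt_def] at hvw; omega)⟩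

end HVG

theorem hvgDegree_eq_two_of_adj_iff {N : ℕ} {x : Fin N → ℝ} {v a b : Fin N} (hab : a ≠ b)
    (h : ∀ w, (HVG x).Adj v w ↔ w = a ∨ w = b) : hvgDegree x v = 2 := by
  have hset : {w | (HVG x).Adj v w} = {a, b} := Set.ext fun w => h w
  rw [hvgDegree, ← Set.coe_ofPred, Nat.card_coe_set_eq, hset, Set.ncard_pair hab]

theorem hvg_inner_min_degree_two {N : ℕ} (x : Fin N → ℝ)
    (j : Fin N) (hj0 : 0 < (j : ℕ)) (hjN : (j : ℕ) < N - 1)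
    (hjmin : ∀ k : Fin N, 0 < (k : ℕ) → (k : ℕ) < N - 1 → x j ≤ x k) :
    hvgDegree x j = 2 ∧
      (∀ w : Fin N, (HVG x).Adj j w ↔
        (w = ⟨(j : ℕ) - 1, by omega⟩ ∨ w = ⟨(j : ℕ) + 1, by omega⟩)) := by
  have hadj := HVG.adj_iff_of_le_pred_of_le_succ (x := x) (v := j) (l := ⟨(j : ℕ) - 1, by omega⟩)
    (r := ⟨(j : ℕ) + 1, by omega⟩) (by dsimp only; omega) rfl
    (fun hl => hjmin _ hl (by dsimp only; omega)) (fun hr => hjmin _ (by dsimp only; omega) hr)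
  exact ⟨hvgDegree_eq_two_of_adj_iff (Fin.ne_of_val_ne (by dsimp only; omega)) hadj, hadj⟩
end

section
/- Let x : Fin N → ℝ be canonical with N ≥ 4, and let j be an inner vertex with degree 2 in HVG(x). Then the two neighbors of j are j-1 and j+1, and moreover x j < x (j-1) and x j < x (j+1) (j is a local minimum), and j-1 is adjacent to j+1 in HVG(x). -/
lemma forall_iff_eq_or_eq_of_card_subtype_eq_two {α : Type*} {p : α → Prop} {a b : α}
    (hcard : Nat.card {w // p w} = 2) (ha : p a) (hb : p b) (hab : a ≠ b) (w : α) :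
    p w ↔ w = a ∨ w = b := by
  have hpair : ({a, b} : Set α) = {w | p w} := by
    have hfin : Finite {w // p w} := Nat.finite_of_card_ne_zero (by omega)
    refine Set.eq_of_subset_of_ncard_le ?_ ?_ hfin
    · rintro w (rfl | rfl) <;> assumption
    · rw [Set.ncard_pair hab, ← Nat.card_coe_set_eq]
      exact hcard.le
  simpa using (Set.ext_iff.mp hpair w).symm

section HVG

variable {N : ℕ} (x : Fin N → ℝ)

lemma hvg_adj_of_val_add_one_eq {a b : Fin N} (h : (a : ℕ) + 1 = b) : (HVG x).Adj a b :=
  Or.inl ⟨Fin.lt_def.mpr (by omega), fun k hak hkb => by rw [Fin.lt_def] at hak hkb; omega⟩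

lemma hvg_adj_of_lt_of_lt {a j b : Fin N} (haj : (a : ℕ) + 1 = j) (hjb : (j : ℕ) + 1 = b)
    (ha : x j < x a) (hb : x j < x b) : (HVG x).Adj a b := by
  refine Or.inl ⟨Fin.lt_def.mpr (by omega), fun k hak hkb => ?_⟩
  obtain rfl : k = j := by rw [Fin.lt_def] at hak hkb; ext; omega
  exact lt_min ha hb

lemma exists_hvg_adj_left_of_le {i₀ j : Fin N} (hi₀ : i₀ < j) (hx : x j ≤ x i₀) :
    ∃ i < j, x j ≤ x i ∧ (HVG x).Adj i j := by
  classical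
  obtain ⟨i, hi, hmax⟩ := Finset.exists_max_image {i | i < j ∧ x j ≤ x i} id
    ⟨i₀, by simp [hi₀, hx]⟩
  simp only [Finset.mem_filter, Finset.mem_univ, true_and] at hi hmax
  refine ⟨i, hi.1, hi.2, Or.inl ⟨hi.1, fun k hik hkj => ?_⟩⟩
  have hk : x k < x j := by
    by_contra! hk
    exact (hmax k ⟨hkj, hk⟩).not_gt hik
  exact lt_min (hk.trans_le hi.2) hk

lemma exists_hvg_adj_right_of_le {j i₀ : Fin N} (hi₀ : j < i₀) (hx : x j ≤ x i₀) :
    ∃ i, j < i ∧ x j ≤ x i ∧ (HVG x).Adj j i := by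
  classical
  obtain ⟨i, hi, hmin⟩ := Finset.exists_min_image {i | j < i ∧ x j ≤ x i} id
    ⟨i₀, by simp [hi₀, hx]⟩
  simp only [Finset.mem_filter, Finset.mem_univ, true_and] at hi hmin
  refine ⟨i, hi.1, hi.2, Or.inl ⟨hi.1, fun k hjk hki => ?_⟩⟩
  have hk : x k < x j := by
    by_contra! hk
    exact (hmin k ⟨hjk, hk⟩).not_gt hki
  exact lt_min hk (hk.trans_le hi.2)

end HVG

lemma lt_of_le_of_ne_of_lt_ends {N : ℕ} {x : Fin N → ℝ} {lo hi j w : Fin N}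
    (hlo : (lo : ℕ) = 0) (hhi : (hi : ℕ) = N - 1) (hjlo : x j < x lo) (hjhi : x j < x hi)
    (hinj : ∀ k l : Fin N, 0 < (k : ℕ) → (k : ℕ) < N - 1 →
      0 < (l : ℕ) → (l : ℕ) < N - 1 → x k = x l → k = l)
    (hj0 : 0 < (j : ℕ)) (hjN : (j : ℕ) < N - 1) (hwj : w ≠ j) (hle : x j ≤ x w) :
    x j < x w := by
  refine hle.lt_of_ne fun heq => ?_
  by_cases hw0 : (w : ℕ) = 0
  · exact hjlo.ne (heq.trans (congrArg x (Fin.ext (hw0.trans hlo.symm))))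
  by_cases hwN : (w : ℕ) = N - 1
  · exact hjhi.ne (heq.trans (congrArg x (Fin.ext (hwN.trans hhi.symm))))
  exact hwj (hinj j w hj0 hjN (by omega) (by omega) heq).symm

theorem hvg_degree_two_local_min {N : ℕ} (hN : 4 ≤ N) (x : Fin N → ℝ)
    (hmax : ∀ k : Fin N, 0 < (k : ℕ) → (k : ℕ) < N - 1 →
      x k < min (x ⟨0, by omega⟩) (x ⟨N - 1, by omega⟩))
    (hinj : ∀ k l : Fin N, 0 < (k : ℕ) → (k : ℕ) < N - 1 →
      0 < (l : ℕ) → (l : ℕ) < N - 1 → x k = x l → k = l)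
    (j : Fin N) (hj0 : 0 < (j : ℕ)) (hjN : (j : ℕ) < N - 1)
    (hdeg : hvgDegree x j = 2) :
    (∀ w : Fin N, (HVG x).Adj j w ↔
      (w = ⟨(j : ℕ) - 1, by omega⟩ ∨ w = ⟨(j : ℕ) + 1, by omega⟩)) ∧
    x j < x ⟨(j : ℕ) - 1, by omega⟩ ∧ x j < x ⟨(j : ℕ) + 1, by omega⟩ ∧
    (HVG x).Adj ⟨(j : ℕ) - 1, by omega⟩ ⟨(j : ℕ) + 1, by omega⟩ := by
  set jm : Fin N := ⟨(j : ℕ) - 1, by omega⟩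
  set jp : Fin N := ⟨(j : ℕ) + 1, by omega⟩
  have hjm : (jm : ℕ) + 1 = j := by simp only [jm]; omega
  have hjp : (j : ℕ) + 1 = jp := rfl
  have hnbr : ∀ w, (HVG x).Adj j w ↔ w = jm ∨ w = jp :=
    forall_iff_eq_or_eq_of_card_subtype_eq_two hdeg (hvg_adj_of_val_add_one_eq x hjm).symm
      (hvg_adj_of_val_add_one_eq x hjp) (Fin.ne_of_val_ne (by omega))
  have hjlo : x j < x ⟨0, by omega⟩ := (hmax j hj0 hjN).trans_le (min_le_left _ _)
  have hjhi : x j < x ⟨N - 1, by omega⟩ := (hmax j hj0 hjN).trans_le (min_le_right _ _)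
  obtain ⟨i, hij, hle, hadj⟩ := exists_hvg_adj_left_of_le x (Fin.lt_def.mpr hj0) hjlo.le
  obtain rfl : i = jm := ((hnbr i).mp hadj.symm).resolve_right
    (by rintro rfl; exact absurd (Fin.lt_def.mp hij) (by omega))
  obtain ⟨k, hjk, hle', hadj'⟩ := exists_hvg_adj_right_of_le x (Fin.lt_def.mpr hjN) hjhi.le
  obtain rfl : k = jp := ((hnbr k).mp hadj').resolve_left
    (by rintro rfl; exact absurd (Fin.lt_def.mp hjk) (by omega))
  have hlm := lt_of_le_of_ne_of_lt_ends rfl rfl hjlo hjhi hinj hj0 hjN (Fin.ne_of_lt hij) hle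
  have hlp := lt_of_le_of_ne_of_lt_ends rfl rfl hjlo hjhi hinj hj0 hjN (Fin.ne_of_gt hjk) hle'
  exact ⟨hnbr, hlm, hlp, hvg_adj_of_lt_of_lt x hjm hjp hlm hlp⟩
end
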